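/- For d = 2, the identity A₂² + C₂² + 2G₂² = (A₂ + G₂)² holds in ℤ[[q]] (equivalently C₂² + G₂² = 2A₂G₂), whereas for every even integer d > 2 one has A_d² + C_d² + 2G_d² ≠ (A_d + G_d)² in ℤ[[q]]. That is, the two homogeneous polynomials X² + Y² + 2Z² and (X + Z)² yield the same theta series at level ℓ = 7 and different theta series at every level ℓ ≡ 7 (mod 8) with ℓ > 7. -/

import Mathlib

noncomputable section

/-- The positive definite quadratic form `Q_d(x,y) = x² + xy + d y²`. -/
def Qform (d : ℕ) (x y : ℤ) : ℤ := x ^ 2 + x * y + (d : ℤ) * y ^ 2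

/-- The coset theta series `θ^{(2,d)}_{a,b}`. -/
def cosetTheta (d : ℕ) (a b : ℤ) : PowerSeries ℤ :=
  PowerSeries.mk fun k =>
    (Set.ncard {mn : ℤ × ℤ |
      Qform d (2 * mn.1 + a) (2 * mn.2 + b) = (k : ℤ)} : ℤ)

/-- `A_d = θ^{(2,d)}_{0,0}`. -/
def Az (d : ℕ) : PowerSeries ℤ := cosetTheta d 0 0
/-- `C_d = θ^{(2,d)}_{1,0}`. -/
def Cz (d : ℕ) : PowerSeries ℤ := cosetTheta d 1 0
/-- `G_d = θ^{(2,d)}_{0,1}`. -/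
def Gz (d : ℕ) : PowerSeries ℤ := cosetTheta d 0 1

/-
Write `Q = Qform 2` and view `ℤ²` as `ℤ[τ]`, `τ = (1 + √-7)/2`, so that `Q` is the norm form.
The identity `C² + G² = 2AG` is a bijection of representations. A pair `(x, y)` of vectors in the
same coset of `2ℤ²` is `(u + v, u - v)` for a unique pair `(u, v)`, and the parallelogram law gives
`Q x + Q y = 2 (Q u + Q v)`; the pairs counted by `C² + G²` are exactly those for which `u₁ + u₂`
and `v₁ + v₂` have different parities. Multiplication by `τ`, of norm `2`, maps the vectors with
`u₁ + u₂` even (resp. odd) onto the coset `2ℤ²` (resp. `(0, 1) + 2ℤ²`) and doubles `Q`, which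
turns these pairs into two copies of the pairs counted by `AG`.

For `d > 2` the identity fails at `q²`: `G_d` starts at `q^d`, while `C_d = 2q + O(q³)` because
`Q_d` is odd on `(1, 0) + 2ℤ²`.
-/

open PowerSeries Function Finset

section ThetaSeries

variable {α β : Type*}

def thetaSeries (f : α → ℤ) (S : Set α) : PowerSeries ℤ :=
  PowerSeries.mk fun k => ({x ∈ S | f x = k}.ncard : ℤ)

theorem coeff_thetaSeries (f : α → ℤ) (S : Set α) (k : ℕ) :
    coeff k (thetaSeries f S) = ({x ∈ S | f x = k}.ncard : ℤ) :=
  coeff_mk _ _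

theorem thetaSeries_image {f : α → ℤ} {e : β → α} (he : Injective e) (S : Set β) :
    thetaSeries f (e '' S) = thetaSeries (f ∘ e) S := by
  ext k
  rw [coeff_thetaSeries, coeff_thetaSeries, ← Set.ncard_image_of_injective _ he]
  congr 2
  ext y
  simp only [Set.mem_ofPred_eq, Set.mem_image, comp_apply]
  constructor
  · rintro ⟨⟨x, hx, rfl⟩, hk⟩
    exact ⟨x, ⟨hx, hk⟩, rfl⟩
  · rintro ⟨x, ⟨hx, hk⟩, rfl⟩
    exact ⟨⟨x, hx, rfl⟩, hk⟩

theorem thetaSeries_union {f : α → ℤ} (hf : ∀ k, {x | f x ≤ k}.Finite) {S T : Set α}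
    (hST : Disjoint S T) : thetaSeries f (S ∪ T) = thetaSeries f S + thetaSeries f T := by
  ext k
  have hfin (U : Set α) : {x ∈ U | f x = k}.Finite :=
    (hf k).subset fun x hx => hx.2.le
  rw [map_add, coeff_thetaSeries, coeff_thetaSeries, coeff_thetaSeries, ← Nat.cast_add,
    ← Set.ncard_union_eq (hST.mono (fun x hx => hx.1) (fun x hx => hx.1)) (hfin S) (hfin T)]
  congr 2
  ext x
  simp only [Set.mem_ofPred_eq, Set.mem_union]
  tauto

theorem finite_setOf_add_le {f : α → ℤ} {g : β → ℤ} (hf0 : ∀ x, 0 ≤ f x) (hg0 : ∀ y, 0 ≤ g y)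
    (hf : ∀ k, {x | f x ≤ k}.Finite) (hg : ∀ k, {y | g y ≤ k}.Finite) (k : ℤ) :
    {p : α × β | f p.1 + g p.2 ≤ k}.Finite :=
  ((hf k).prod (hg k)).subset fun p hp => by
    have := hf0 p.1
    have := hg0 p.2
    simp only [Set.mem_ofPred_eq, Set.mem_prod] at hp ⊢
    constructor <;> linarith

theorem thetaSeries_mul {f : α → ℤ} {g : β → ℤ} (hf0 : ∀ x, 0 ≤ f x) (hg0 : ∀ y, 0 ≤ g y)
    (hf : ∀ k, {x | f x ≤ k}.Finite) (hg : ∀ k, {y | g y ≤ k}.Finite) (S : Set α) (T : Set β) :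
    thetaSeries f S * thetaSeries g T = thetaSeries (fun p => f p.1 + g p.2) (S ×ˢ T) := by
  ext k
  set fiber : ℕ × ℕ → Set (α × β) := fun ij =>
    {x ∈ S | f x = ij.1} ×ˢ {y ∈ T | g y = ij.2} with hfiber
  have hunion : {p ∈ S ×ˢ T | f p.1 + g p.2 = k} =
      ⋃ ij ∈ (antidiagonal k : Set (ℕ × ℕ)), fiber ij := by
    ext ⟨x, y⟩
    simp only [hfiber, Set.mem_ofPred_eq, Set.mem_prod, Set.mem_iUnion, Finset.mem_coe,
      Finset.HasAntidiagonal.mem_antidiagonal, exists_prop, Prod.exists]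
    constructor
    · rintro ⟨⟨hx, hy⟩, hk⟩
      have := hf0 x
      have := hg0 y
      exact ⟨(f x).toNat, (g y).toNat, by omega, ⟨hx, by omega⟩, hy, by omega⟩
    · rintro ⟨i, j, hij, ⟨hx, hi⟩, hy, hj⟩
      exact ⟨⟨hx, hy⟩, by rw [hi, hj, ← hij]; push_cast; rfl⟩
  have hfin : ∀ ij ∈ (antidiagonal k : Set (ℕ × ℕ)), (fiber ij).Finite := fun ij _ =>
    ((hf ij.1).subset fun x hx => hx.2.le).prod ((hg ij.2).subset fun y hy => hy.2.le)
  have hdisj : (antidiagonal k : Set (ℕ × ℕ)).PairwiseDisjoint fiber := by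
    rintro ⟨i, j⟩ _ ⟨i', j'⟩ _ hne
    refine Set.disjoint_left.2 fun p hp hp' => hne ?_
    simp only [hfiber, Set.mem_prod, Set.mem_ofPred_eq] at hp hp'
    simp only [Prod.mk.injEq]
    omega
  rw [coeff_mul, coeff_thetaSeries, hunion,
    (antidiagonal k).finite_toSet.ncard_biUnion hfin hdisj, finsum_mem_coe_finset]
  push_cast
  refine Finset.sum_congr rfl fun ij _ => ?_
  rw [Set.ncard_prod, coeff_thetaSeries, coeff_thetaSeries, Nat.cast_mul]

end ThetaSeries

theorem four_mul_Qform (d : ℕ) (x y : ℤ) :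
    4 * Qform d x y = (2 * x + y) ^ 2 + (4 * d - 1) * y ^ 2 := by
  unfold Qform
  ring

theorem Qform_nonneg {d : ℕ} (hd : 0 < d) (x y : ℤ) : 0 ≤ Qform d x y := by
  have h := four_mul_Qform d x y
  have : (1 : ℤ) ≤ d := by exact_mod_cast hd
  nlinarith [sq_nonneg (2 * x + y), sq_nonneg y]

theorem finite_setOf_Qform_le {d : ℕ} (hd : 0 < d) (k : ℤ) :
    {v : ℤ × ℤ | uncurry (Qform d) v ≤ k}.Finite := by
  refine ((Set.finite_Icc (-2 * k) (2 * k)).prod (Set.finite_Icc (-2 * k) (2 * k))).subset ?_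
  rintro ⟨x, y⟩ hv
  have h := four_mul_Qform d x y
  have : (1 : ℤ) ≤ d := by exact_mod_cast hd
  simp only [Set.mem_ofPred_eq, uncurry_apply_pair] at hv
  simp only [Set.mem_prod, Set.mem_Icc]
  refine ⟨⟨?_, ?_⟩, ?_, ?_⟩ <;>
    nlinarith [Int.le_self_sq y, Int.le_self_sq (-y), Int.le_self_sq (2 * x + y),
      Int.le_self_sq (-(2 * x + y)), mul_nonneg (sub_nonneg.2 this) (sq_nonneg y)]

theorem Qform_add_add_Qform_sub (d : ℕ) (u v : ℤ × ℤ) :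
    uncurry (Qform d) (u + v) + uncurry (Qform d) (u - v) =
      2 * (uncurry (Qform d) u + uncurry (Qform d) v) := by
  simp only [uncurry_def, Prod.fst_add, Prod.snd_add, Prod.fst_sub, Prod.snd_sub, Qform]
  ring

def parityClass (a b : ℤ) : Set (ℤ × ℤ) := {v | v.1 ≡ a [ZMOD 2] ∧ v.2 ≡ b [ZMOD 2]}

theorem cosetTheta_eq_thetaSeries (d : ℕ) (a b : ℤ) :
    cosetTheta d a b = thetaSeries (uncurry (Qform d)) (parityClass a b) := by
  have hinj : Injective fun mn : ℤ × ℤ => (2 * mn.1 + a, 2 * mn.2 + b) := by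
    rintro ⟨m, n⟩ ⟨m', n'⟩ h
    simp only [Prod.mk.injEq] at h ⊢
    omega
  have hrange : (fun mn : ℤ × ℤ => (2 * mn.1 + a, 2 * mn.2 + b)) '' Set.univ = parityClass a b := by
    ext ⟨x, y⟩
    simp only [Set.image_univ, Set.mem_range, Prod.exists, Prod.mk.injEq, parityClass,
      Set.mem_ofPred_eq, Int.ModEq]
    constructor
    · rintro ⟨m, n, rfl, rfl⟩
      omega
    · rintro ⟨hx, hy⟩
      exact ⟨(x - a) / 2, (y - b) / 2, by omega, by omega⟩
  rw [← hrange, thetaSeries_image hinj]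
  ext k
  simp [cosetTheta, coeff_thetaSeries]

def sumParityClass (b : ℤ) : Set (ℤ × ℤ) := {v | v.1 + v.2 ≡ b [ZMOD 2]}

/-- Under `(x, y) ↦ x + yτ`, `τ = (1 + √-7)/2`, this is multiplication by `τ` (`τ² = τ - 2`). -/
def mulTau (v : ℤ × ℤ) : ℤ × ℤ := (-2 * v.2, v.1 + v.2)

theorem mulTau_injective : Injective mulTau := by
  rintro ⟨x, y⟩ ⟨x', y'⟩ h
  simp only [mulTau, Prod.mk.injEq] at h ⊢
  omega

theorem Qform_two_comp_mulTau : uncurry (Qform 2) ∘ mulTau = fun v => 2 * uncurry (Qform 2) v := by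
  funext v
  simp only [comp_apply, mulTau, uncurry_def, Qform]
  push_cast
  ring

theorem image_mulTau_sumParityClass (b : ℤ) : mulTau '' sumParityClass b = parityClass 0 b := by
  ext ⟨x, y⟩
  simp only [Set.mem_image, sumParityClass, parityClass, mulTau, Set.mem_ofPred_eq, Int.ModEq,
    Prod.exists, Prod.mk.injEq]
  constructor
  · rintro ⟨u, v, h, rfl, rfl⟩
    omega
  · rintro ⟨hx, hy⟩
    exact ⟨y + x / 2, -(x / 2), by omega, by omega, by omega⟩

theorem thetaSeries_two_mul_Qform_two_sumParityClass (b : ℤ) :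
    thetaSeries (fun v => 2 * uncurry (Qform 2) v) (sumParityClass b) = cosetTheta 2 0 b := by
  rw [cosetTheta_eq_thetaSeries, ← image_mulTau_sumParityClass, thetaSeries_image mulTau_injective,
    Qform_two_comp_mulTau]

theorem addSub_injective : Injective fun p : (ℤ × ℤ) × (ℤ × ℤ) => (p.1 + p.2, p.1 - p.2) := by
  rintro ⟨u, v⟩ ⟨u', v'⟩ h
  simp only [Prod.ext_iff, Prod.fst_add, Prod.snd_add, Prod.fst_sub, Prod.snd_sub] at h ⊢
  omega

theorem image_addSub_sumParityClass :
    (fun p : (ℤ × ℤ) × (ℤ × ℤ) => (p.1 + p.2, p.1 - p.2)) ''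
        (sumParityClass 0 ×ˢ sumParityClass 1 ∪ sumParityClass 1 ×ˢ sumParityClass 0) =
      parityClass 1 0 ×ˢ parityClass 1 0 ∪ parityClass 0 1 ×ˢ parityClass 0 1 := by
  ext ⟨⟨a, b⟩, c, e⟩
  simp only [Set.mem_image, Set.mem_union, Set.mem_prod, sumParityClass, parityClass,
    Set.mem_ofPred_eq, Int.ModEq, Prod.exists, Prod.mk.injEq, Prod.mk_add_mk, Prod.mk_sub_mk]
  constructor
  · rintro ⟨u₁, u₂, v₁, v₂, h, ⟨rfl, rfl⟩, rfl, rfl⟩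
    omega
  · intro h
    exact ⟨(a + c) / 2, (b + e) / 2, (a - c) / 2, (b - e) / 2, by omega, ⟨by omega, by omega⟩,
      by omega, by omega⟩

theorem Cz_two_sq_add_Gz_two_sq : Cz 2 ^ 2 + Gz 2 ^ 2 = 2 * Az 2 * Gz 2 := by
  set Q := uncurry (Qform 2)
  have hQ0 : ∀ v, 0 ≤ Q v := fun v => Qform_nonneg two_pos v.1 v.2
  have hQ : ∀ k, {v | Q v ≤ k}.Finite := finite_setOf_Qform_le two_pos
  have hQ2 : ∀ k, {v | 2 * Q v ≤ k}.Finite := fun k =>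
    (hQ k).subset fun v hv => by have := hQ0 v; simp only [Set.mem_ofPred_eq] at hv ⊢; linarith
  have hQ20 : ∀ v, 0 ≤ 2 * Q v := fun v => by have := hQ0 v; positivity
  have hdisj : Disjoint (sumParityClass 0) (sumParityClass 1) := by
    refine Set.disjoint_left.2 fun v h0 h1 => ?_
    simp only [sumParityClass, Set.mem_ofPred_eq, Int.ModEq] at h0 h1
    omega
  have hpdisj : Disjoint (parityClass 1 0) (parityClass 0 1) := by
    refine Set.disjoint_left.2 fun v h0 h1 => ?_
    simp only [parityClass, Set.mem_ofPred_eq, Int.ModEq] at h0 h1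
    omega
  calc Cz 2 ^ 2 + Gz 2 ^ 2
      = thetaSeries (fun p => Q p.1 + Q p.2)
          (parityClass 1 0 ×ˢ parityClass 1 0 ∪ parityClass 0 1 ×ˢ parityClass 0 1) := by
        rw [thetaSeries_union (finite_setOf_add_le hQ0 hQ0 hQ hQ)
          (Set.disjoint_prod.2 (Or.inl hpdisj)), ← thetaSeries_mul hQ0 hQ0 hQ hQ,
          ← thetaSeries_mul hQ0 hQ0 hQ hQ, Cz, Gz, cosetTheta_eq_thetaSeries,
          cosetTheta_eq_thetaSeries, sq, sq]
    _ = thetaSeries (fun p => 2 * Q p.1 + 2 * Q p.2)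
          (sumParityClass 0 ×ˢ sumParityClass 1 ∪ sumParityClass 1 ×ˢ sumParityClass 0) := by
        rw [← image_addSub_sumParityClass, thetaSeries_image addSub_injective]
        congr 1
        funext p
        simp only [comp_apply, Qform_add_add_Qform_sub, Q]
        ring
    _ = 2 * Az 2 * Gz 2 := by
        rw [thetaSeries_union (finite_setOf_add_le hQ20 hQ20 hQ2 hQ2)
          (Set.disjoint_prod.2 (Or.inl hdisj)), ← thetaSeries_mul hQ20 hQ20 hQ2 hQ2,
          ← thetaSeries_mul hQ20 hQ20 hQ2 hQ2, thetaSeries_two_mul_Qform_two_sumParityClass,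
          thetaSeries_two_mul_Qform_two_sumParityClass, Az, Gz]
        ring

theorem coeff_cosetTheta (d : ℕ) (a b : ℤ) (k : ℕ) :
    coeff k (cosetTheta d a b) =
      ({mn : ℤ × ℤ | Qform d (2 * mn.1 + a) (2 * mn.2 + b) = k}.ncard : ℤ) :=
  coeff_mk _ _

theorem coeff_Cz_of_even (d : ℕ) {k : ℕ} (hk : Even k) : coeff k (Cz d) = 0 := by
  rw [Cz, coeff_cosetTheta, Nat.cast_eq_zero]
  convert Set.ncard_empty (ℤ × ℤ)
  refine Set.eq_empty_of_forall_notMem fun ⟨m, n⟩ h => ?_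
  obtain ⟨j, rfl⟩ := hk
  have hodd : Qform d (2 * m + 1) (2 * n + 0) =
      2 * (2 * m ^ 2 + 2 * m + (2 * m + 1) * n + 2 * d * n ^ 2) + 1 := by
    unfold Qform
    ring
  simp only [Set.mem_ofPred_eq, hodd] at h
  push_cast at h
  omega

theorem coeff_Gz_of_lt {d k : ℕ} (hk : k < d) : coeff k (Gz d) = 0 := by
  rw [Gz, coeff_cosetTheta, Nat.cast_eq_zero]
  convert Set.ncard_empty (ℤ × ℤ)
  refine Set.eq_empty_of_forall_notMem fun ⟨m, n⟩ h => ?_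
  simp only [Set.mem_ofPred_eq] at h
  have h4 := four_mul_Qform d (2 * m + 0) (2 * n + 1)
  have hkd : (k : ℤ) + 1 ≤ d := by exact_mod_cast hk
  have hodd : 1 ≤ (2 * n + 1) ^ 2 := by nlinarith [Int.le_self_sq (-n)]
  nlinarith [sq_nonneg (2 * (2 * m + 0) + (2 * n + 1))]

theorem coeff_one_Cz {d : ℕ} (hd : 0 < d) : coeff 1 (Cz d) = 2 := by
  have hd1 : (1 : ℤ) ≤ d := by exact_mod_cast hd
  have hset : {mn : ℤ × ℤ | Qform d (2 * mn.1 + 1) (2 * mn.2 + 0) = ((1 : ℕ) : ℤ)} =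
      {(0, 0), (-1, 0)} := by
    ext ⟨m, n⟩
    simp only [Set.mem_ofPred_eq, Set.mem_insert_iff, Set.mem_singleton_iff, Prod.mk.injEq]
    constructor
    · intro h
      have h4 := four_mul_Qform d (2 * m + 1) (2 * n + 0)
      have hn : n = 0 := by
        by_contra hn
        have : 1 ≤ n ^ 2 := one_le_sq_iff_one_le_abs n |>.2 (Int.one_le_abs hn)
        push_cast at h
        nlinarith [sq_nonneg (2 * (2 * m + 1) + (2 * n + 0)),
          mul_nonneg (sub_nonneg.2 hd1) (sq_nonneg n)]
      subst hn
      have : m * (m + 1) = 0 := by simp only [Qform] at h; push_cast at h; linarith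
      rcases mul_eq_zero.1 this with h | h <;> omega
    · rintro (⟨rfl, rfl⟩ | ⟨rfl, rfl⟩) <;> norm_num [Qform]
  rw [Cz, coeff_cosetTheta, hset, Set.ncard_pair (by decide)]
  rfl

theorem coeff_two_Cz_sq {d : ℕ} (hd : 0 < d) : coeff 2 (Cz d ^ 2) = 4 := by
  have hC0 : constantCoeff (Cz d) = 0 := by
    rw [← coeff_zero_eq_constantCoeff_apply]
    exact coeff_Cz_of_even d Even.zero
  rw [sq, coeff_mul, Finset.Nat.sum_antidiagonal_eq_sum_range_succ_mk]
  norm_num [Finset.sum_range_succ, coeff_one_Cz hd, hC0, coeff_Cz_of_even d even_two]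

theorem stmt10 :
    (Az 2 ^ 2 + Cz 2 ^ 2 + 2 * Gz 2 ^ 2 = (Az 2 + Gz 2) ^ 2) ∧
    (∀ d : ℕ, 2 < d → Even d →
      Az d ^ 2 + Cz d ^ 2 + 2 * Gz d ^ 2 ≠ (Az d + Gz d) ^ 2) := by
  refine ⟨by linear_combination Cz_two_sq_add_Gz_two_sq, fun d hd _ h => ?_⟩
  have hG : X ^ 3 ∣ Gz d := X_pow_dvd_iff.2 fun m hm => coeff_Gz_of_lt (by omega)
  have hC : Cz d ^ 2 = 2 * Az d * Gz d - Gz d ^ 2 := by linear_combination h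
  have hCsq : X ^ 3 ∣ Cz d ^ 2 := hC ▸ (dvd_mul_of_dvd_right hG _).sub (dvd_pow hG two_ne_zero)
  have := X_pow_dvd_iff.1 hCsq 2 (by norm_num)
  rw [coeff_two_Cz_sq (by omega)] at this
  norm_num at this
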